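/- Assume the closed sets K₁ ⊆ ℂ^{n₁}, …, K_ℓ ⊆ ℂ^{n_ℓ} each support the SC-inequality (in their respective dimensions). Then the Cartesian product K₁ × ⋯ × K_ℓ ⊆ ℂ^{n₁+⋯+n_ℓ} supports the SC-inequality. -/

import Mathlib

open MeasureTheory Real Set
open scoped Pointwise

/-- The standard Gaussian measure `ν_n` on `ℂⁿ`, with density
`(2π)⁻ⁿ exp(-|z|²/2)` with respect to Lebesgue measure. -/
noncomputable def nuC (n : ℕ) : MeasureTheory.Measure (Fin n → ℂ) :=
  MeasureTheory.volume.withDensity fun z =>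
    ENNReal.ofReal (((2 * Real.pi) ^ n)⁻¹ * Real.exp (-(∑ k, ‖z k‖ ^ 2) / 2))

/-- The cylinder `{z ∈ ℂⁿ : |z₁| ≤ R}`. -/
def cylC {n : ℕ} (hn : 0 < n) (R : ℝ) : Set (Fin n → ℂ) :=
  {z | ‖z ⟨0, hn⟩‖ ≤ R}

/-- `K ⊆ ℂⁿ` supports the SC-inequality: for every cylinder `C` (with `R ≥ 0`) of
the same Gaussian measure and every `t ≥ 1`, one has `ν_n(tK) ≥ ν_n(tC)`. -/
def SupportsSC {n : ℕ} (hn : 0 < n) (K : Set (Fin n → ℂ)) : Prop :=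
  ∀ R : ℝ, 0 ≤ R → nuC n K = nuC n (cylC hn R) →
    ∀ t : ℝ, 1 ≤ t → nuC n (t • cylC hn R) ≤ nuC n (t • K)

/-- The coordinate of the product space `ℂ^(n 0 + ⋯ + n (ℓ-1))` corresponding to
the `j`-th coordinate of the `i`-th factor (blocks listed in order). -/
def blockIdx {ℓ : ℕ} (n : Fin ℓ → ℕ) (i : Fin ℓ) (j : Fin (n i)) : Fin (∑ k, n k) :=
  ⟨(∑ k ∈ Finset.univ.filter (fun k => k < i), n k) + j, by
    have h1 : (∑ k ∈ Finset.univ.filter (fun k => k < i), n k) + (j : ℕ) <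
        (∑ k ∈ Finset.univ.filter (fun k => k < i), n k) + n i :=
      Nat.add_lt_add_left j.isLt _
    have h2 : (∑ k ∈ insert i (Finset.univ.filter (fun k => k < i)), n k) ≤ ∑ k, n k :=
      Finset.sum_le_sum_of_subset (Finset.subset_univ _)
    rw [Finset.sum_insert (by simp)] at h2
    omega⟩

/-!
The Gaussian measure on `ℂⁿ` is the product of `n` copies of the standard Gaussian on `ℂ`, under
which the disc of radius `R` has mass `1 - exp (-R² / 2)`. So a cylinder of measure `a`, dilated by
`t`, has measure `1 - (1 - a) ^ t²`, and the SC-inequality for `Kᵢ` says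
`ν (t • Kᵢ) ≥ 1 - (1 - aᵢ) ^ t²` with `aᵢ = ν Kᵢ` (for `aᵢ = 1` there is no matching cylinder, but
then the closed set `Kᵢ` is everything). The product set has measure `∏ aᵢ` and dilates factorwise,
so the claim reduces to `1 - (1 - ∏ aᵢ) ^ s ≤ ∏ (1 - (1 - aᵢ) ^ s)` for `s ≥ 1`: the map
`a ↦ 1 - (1 - a) ^ s` is supermultiplicative on `[0, 1]`, by convexity of `x ↦ x ^ s`.
-/

lemma ConvexOn.add_le_add_of_add_eq {D : Set ℝ} {f : ℝ → ℝ} (hf : ConvexOn ℝ D f)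
    {a b u v : ℝ} (hu : u ∈ D) (hv : v ∈ D) (hua : u ≤ a) (hub : u ≤ b) (hav : a ≤ v)
    (hbv : b ≤ v) (hsum : a + b = u + v) : f a + f b ≤ f u + f v := by
  rcases (hua.trans hav).eq_or_lt with huv | huv
  · have ha : a = u := by linarith
    have hb : b = u := by linarith
    rw [ha, hb, huv]
  -- `a` and `b` are the convex combinations of `u, v` with swapped weights
  set w := (v - a) / (v - u)
  have hw0 : 0 ≤ w := div_nonneg (by linarith) (by linarith)
  have hw1 : w ≤ 1 := (div_le_one (by linarith)).2 (by linarith)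
  have ha : w • u + (1 - w) • v = a := by simp only [w, smul_eq_mul]; field_simp; ring
  have hb : (1 - w) • u + w • v = b := by
    simp only [w, smul_eq_mul]; field_simp; linear_combination (u - v) * hsum
  have h1 := hf.2 hu hv hw0 (sub_nonneg.2 hw1) (by ring)
  have h2 := hf.2 hu hv (sub_nonneg.2 hw1) hw0 (by ring)
  rw [ha] at h1
  rw [hb] at h2
  simp only [smul_eq_mul] at h1 h2
  linarith

lemma one_sub_one_sub_mul_rpow_le {p a b : ℝ} (hp : 1 ≤ p) (ha : a ∈ Icc (0 : ℝ) 1)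
    (hb : b ∈ Icc (0 : ℝ) 1) :
    1 - (1 - a * b) ^ p ≤ (1 - (1 - a) ^ p) * (1 - (1 - b) ^ p) := by
  obtain ⟨ha0, ha1⟩ := ha
  obtain ⟨hb0, hb1⟩ := hb
  have key := (convexOn_rpow hp).add_le_add_of_add_eq (a := 1 - a) (b := 1 - b)
    (u := (1 - a) * (1 - b)) (v := 1 - a * b) (mem_Ici.2 (by nlinarith)) (mem_Ici.2 (by nlinarith))
    (by nlinarith) (by nlinarith) (by nlinarith) (by nlinarith) (by ring)
  rw [Real.mul_rpow (by linarith) (by linarith)] at key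
  nlinarith

lemma one_sub_one_sub_rpow_nonneg {p a : ℝ} (hp : 0 ≤ p) (ha : a ∈ Icc (0 : ℝ) 1) :
    0 ≤ 1 - (1 - a) ^ p :=
  sub_nonneg.2 (Real.rpow_le_one (by linarith [ha.2]) (by linarith [ha.1]) (by linarith))

lemma one_sub_one_sub_prod_rpow_le {ι : Type*} (s : Finset ι) {p : ℝ} (hp : 1 ≤ p) {a : ι → ℝ}
    (ha : ∀ i ∈ s, a i ∈ Icc (0 : ℝ) 1) :
    1 - (1 - ∏ i ∈ s, a i) ^ p ≤ ∏ i ∈ s, (1 - (1 - a i) ^ p) := by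
  classical
  induction s using Finset.induction_on with
  | empty => simp [Real.zero_rpow (by linarith : p ≠ 0)]
  | insert j s hj ih =>
    rw [Finset.forall_mem_insert] at ha
    have hprod : ∏ i ∈ s, a i ∈ Icc (0 : ℝ) 1 :=
      ⟨Finset.prod_nonneg fun i hi => (ha.2 i hi).1,
        Finset.prod_le_one (fun i hi => (ha.2 i hi).1) fun i hi => (ha.2 i hi).2⟩
    rw [Finset.prod_insert hj, Finset.prod_insert hj]
    exact (one_sub_one_sub_mul_rpow_le hp ha.1 hprod).trans
      (mul_le_mul_of_nonneg_left (ih ha.2) (one_sub_one_sub_rpow_nonneg (by linarith) ha.1))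

lemma measure_pi_setOf_forall_sigma_mem {ι ι' α : Type*} {κ : ι → Type*} [Fintype ι]
    [∀ i, Fintype (κ i)] [Fintype ι'] [MeasurableSpace α] (μ : Measure α)
    [IsProbabilityMeasure μ] (e : (Σ i, κ i) ≃ ι') {A : ∀ i, Set (κ i → α)}
    (hA : ∀ i, MeasurableSet (A i)) :
    Measure.pi (fun _ : ι' => μ) {z | ∀ i, (fun j => z (e ⟨i, j⟩)) ∈ A i} =
      ∏ i, Measure.pi (fun _ : κ i => μ) (A i) := by
  have hcurry : MeasurePreserving (MeasurableEquiv.piCurry fun _ _ => α)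
      (Measure.pi fun _ : (Σ i, κ i) => μ) (Measure.pi fun i => Measure.pi fun _ : κ i => μ) := by
    refine ⟨by fun_prop, ?_⟩
    simpa only [Measure.infinitePi_eq_pi] using
      Measure.infinitePi_map_piCurry (fun (i : ι) (_ : κ i) => μ)
  have hset : {z : ι' → α | ∀ i, (fun j => z (e ⟨i, j⟩)) ∈ A i} =
      (MeasurableEquiv.piCurry (fun _ _ => α) ∘ (MeasurableEquiv.piCongrLeft (fun _ => α) e).symm)
        ⁻¹' Set.univ.pi A := by
    ext z
    simp only [Set.mem_preimage, Function.comp_apply, Set.mem_univ_pi, MeasurableEquiv.coe_piCurry]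
    rfl
  rw [hset, (hcurry.comp (measurePreserving_piCongrLeft _ e).symm).measure_preimage
    (MeasurableSet.univ_pi hA).nullMeasurableSet, Measure.pi_pi]

lemma smul_setOf_forall_comp_mem {G α ι ι' : Type*} {κ : ι → Type*} [GroupWithZero G]
    [MulAction G α] (e : ∀ i, κ i → ι') (A : ∀ i, Set (κ i → α)) {t : G} (ht : t ≠ 0) :
    t • {z : ι' → α | ∀ i, (fun j => z (e i j)) ∈ A i} =
      {z | ∀ i, (fun j => z (e i j)) ∈ t • A i} := by
  ext z
  simp only [mem_smul_set_iff_inv_smul_mem₀ ht]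
  rfl

noncomputable def complexGaussianPDF (z : ℂ) : ℝ := (2 * π)⁻¹ * rexp (-‖z‖ ^ 2 / 2)

lemma complexGaussianPDF_nonneg (z : ℂ) : 0 ≤ complexGaussianPDF z := by
  unfold complexGaussianPDF; positivity

lemma integral_complexGaussianPDF : ∫ z, complexGaussianPDF z = 1 := by
  have h : ∫ z : ℂ, rexp (-‖z‖ ^ 2 / 2) = 2 * π := by
    convert GaussianFourier.integral_rexp_neg_mul_sq_norm (V := ℂ) (b := 1 / 2) (by norm_num)
      using 1
    · ring_nf
    · norm_num [Complex.finrank_real_complex]; ring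
  unfold complexGaussianPDF
  rw [integral_const_mul, h, inv_mul_cancel₀ (by positivity)]

lemma integrable_complexGaussianPDF : Integrable complexGaussianPDF :=
  Integrable.of_integral_ne_zero (by simp [integral_complexGaussianPDF])

lemma setIntegral_closedBall_complexGaussianPDF {R : ℝ} (hR : 0 ≤ R) :
    ∫ z in Metric.closedBall 0 R, complexGaussianPDF z = 1 - rexp (-R ^ 2 / 2) := by
  set F : ℝ → ℝ := (Iic R).indicator fun r => (2 * π)⁻¹ * rexp (-r ^ 2 / 2)
  have hF : (Metric.closedBall (0 : ℂ) R).indicator complexGaussianPDF = fun z => F ‖z‖ := by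
    ext z
    by_cases h : ‖z‖ ≤ R <;> simp [F, complexGaussianPDF, h]
  have hderiv (r : ℝ) : HasDerivAt (fun r => -((2 * π)⁻¹ * rexp (-r ^ 2 / 2)))
      (r * ((2 * π)⁻¹ * rexp (-r ^ 2 / 2))) r := by
    have h : HasDerivAt (fun u : ℝ => -u ^ 2 / 2) (-r) r :=
      (((hasDerivAt_pow 2 r).neg).div_const 2).congr_deriv (by ring)
    exact (h.exp.const_mul _).neg.congr_deriv (by ring)
  have hradial : ∫ r in Ioi 0, r ^ (2 - 1) • F r = (2 * π)⁻¹ * (1 - rexp (-R ^ 2 / 2)) := by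
    have hmul : (fun r => r ^ (2 - 1) • F r) =
        (Iic R).indicator fun r => r * ((2 * π)⁻¹ * rexp (-r ^ 2 / 2)) := by
      ext r
      by_cases h : r ≤ R <;> simp [F, h]
    rw [hmul, setIntegral_indicator measurableSet_Iic, Ioi_inter_Iic,
      ← intervalIntegral.integral_of_le hR,
      intervalIntegral.integral_eq_sub_of_hasDerivAt (fun r _ => hderiv r)
        ((by fun_prop : Continuous _).intervalIntegrable _ _)]
    norm_num
    ring
  rw [← integral_indicator measurableSet_closedBall, hF, integral_fun_norm_addHaar volume F,
    Complex.finrank_real_complex, hradial, measureReal_def, Complex.volume_ball]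
  norm_num
  field_simp

noncomputable def complexGaussian : Measure ℂ :=
  volume.withDensity fun z => ENNReal.ofReal (complexGaussianPDF z)

lemma complexGaussian_apply {s : Set ℂ} (hs : MeasurableSet s) :
    complexGaussian s = ENNReal.ofReal (∫ z in s, complexGaussianPDF z) := by
  rw [complexGaussian, withDensity_apply _ hs, ofReal_integral_eq_lintegral_ofReal
    integrable_complexGaussianPDF.integrableOn (ae_of_all _ fun z => complexGaussianPDF_nonneg z)]

instance : IsProbabilityMeasure complexGaussian :=
  ⟨by rw [complexGaussian_apply MeasurableSet.univ, setIntegral_univ, integral_complexGaussianPDF,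
    ENNReal.ofReal_one]⟩

lemma complexGaussian_closedBall {R : ℝ} (hR : 0 ≤ R) :
    complexGaussian (Metric.closedBall 0 R) = ENNReal.ofReal (1 - rexp (-R ^ 2 / 2)) := by
  rw [complexGaussian_apply measurableSet_closedBall, setIntegral_closedBall_complexGaussianPDF hR]

lemma nuC_eq_pi (n : ℕ) : nuC n = Measure.pi fun _ => complexGaussian := by
  have hdens : ∀ z : Fin n → ℂ, ((2 * π) ^ n)⁻¹ * rexp (-(∑ k, ‖z k‖ ^ 2) / 2) =
      ∏ k, complexGaussianPDF (z k) := by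
    intro z
    simp only [complexGaussianPDF, Finset.prod_mul_distrib, Finset.prod_const, Finset.card_univ,
      Fintype.card_fin, inv_pow, ← Real.exp_sum]
    rw [← Finset.sum_neg_distrib, Finset.sum_div]
  refine (Measure.pi_eq fun s hs => ?_).symm
  rw [nuC, withDensity_apply _ (.univ_pi hs), volume_pi, Measure.restrict_pi_pi]
  simp_rw [hdens]
  rw [← ofReal_integral_eq_lintegral_ofReal
      (Integrable.fintype_prod fun k => integrable_complexGaussianPDF.integrableOn)
      (ae_of_all _ fun z => Finset.prod_nonneg fun k _ => complexGaussianPDF_nonneg (z k)),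
    integral_fintype_prod_eq_prod,
    ENNReal.ofReal_prod_of_nonneg fun k _ =>
      setIntegral_nonneg (hs k) fun z _ => complexGaussianPDF_nonneg z]
  exact Finset.prod_congr rfl fun k _ => (complexGaussian_apply (hs k)).symm

instance (n : ℕ) : IsProbabilityMeasure (nuC n) := by
  rw [nuC_eq_pi]; infer_instance

instance (n : ℕ) : (nuC n).IsOpenPosMeasure :=
  (withDensity_absolutelyContinuous'
    (by fun_prop : Continuous _).measurable.ennreal_ofReal.aemeasurable
    (ae_of_all _ fun z => (ENNReal.ofReal_pos.2 (by positivity)).ne')).isOpenPosMeasure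

lemma cylC_eq_preimage {n : ℕ} (hn : 0 < n) (R : ℝ) :
    cylC hn R = Function.eval ⟨0, hn⟩ ⁻¹' Metric.closedBall 0 R := by
  ext z; simp [cylC]

lemma nuC_cylC {n : ℕ} (hn : 0 < n) {R : ℝ} (hR : 0 ≤ R) :
    nuC n (cylC hn R) = ENNReal.ofReal (1 - rexp (-R ^ 2 / 2)) := by
  rw [cylC_eq_preimage, nuC_eq_pi,
    (measurePreserving_eval _ _).measure_preimage measurableSet_closedBall.nullMeasurableSet,
    complexGaussian_closedBall hR]

lemma smul_cylC {n : ℕ} (hn : 0 < n) (R : ℝ) {t : ℝ} (ht : 0 < t) :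
    t • cylC hn R = cylC hn (t * R) := by
  ext z
  rw [mem_smul_set_iff_inv_smul_mem₀ ht.ne']
  simp [cylC, abs_of_pos ht, inv_mul_le_iff₀ ht]

lemma nuC_smul_cylC {n : ℕ} (hn : 0 < n) {R t : ℝ} (hR : 0 ≤ R) (ht : 0 < t) :
    nuC n (t • cylC hn R) = ENNReal.ofReal (1 - (1 - (nuC n).real (cylC hn R)) ^ (t ^ 2)) := by
  have hexp : rexp (-R ^ 2 / 2) ≤ 1 := Real.exp_le_one_iff.2 (by nlinarith)
  rw [smul_cylC hn R ht, nuC_cylC hn (mul_nonneg ht.le hR), measureReal_def, nuC_cylC hn hR,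
    ENNReal.toReal_ofReal (sub_nonneg.2 hexp), sub_sub_cancel, ← Real.exp_mul]
  ring_nf

lemma exists_nuC_cylC_eq {n : ℕ} (hn : 0 < n) {A : Set (Fin n → ℂ)} (hA : nuC n A < 1) :
    ∃ R, 0 ≤ R ∧ nuC n (cylC hn R) = nuC n A := by
  have ha : (nuC n).real A < 1 := by
    rw [measureReal_def]; exact ENNReal.toReal_lt_of_lt_ofReal (by simpa using hA)
  have hpos : 0 < 1 - (nuC n).real A := by linarith
  refine ⟨√(-2 * Real.log (1 - (nuC n).real A)), Real.sqrt_nonneg _, ?_⟩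
  have hlog : Real.log (1 - (nuC n).real A) ≤ 0 :=
    Real.log_nonpos hpos.le (by linarith [measureReal_nonneg (μ := nuC n) (s := A)])
  rw [nuC_cylC hn (Real.sqrt_nonneg _), Real.sq_sqrt (by linarith),
    show -(-2 * Real.log (1 - (nuC n).real A)) / 2 = Real.log (1 - (nuC n).real A) by ring,
    Real.exp_log hpos, sub_sub_cancel, ofReal_measureReal]

lemma blockIdx_eq_finSigmaFinEquiv {ℓ : ℕ} (n : Fin ℓ → ℕ) (i : Fin ℓ) (j : Fin (n i)) :
    blockIdx n i j = finSigmaFinEquiv ⟨i, j⟩ := by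
  ext
  rw [finSigmaFinEquiv_apply]
  show _ + (j : ℕ) = _ + j
  congr 1
  symm
  exact Finset.sum_bij' (fun k _ => Fin.castLE i.2.le k) (fun k hk => ⟨k, by simpa using hk⟩)
    (fun k _ => by simpa using Fin.lt_def.2 k.2) (by simp) (by simp) (by simp) (by simp)

lemma nuC_setOf_forall_blockIdx_mem {ℓ : ℕ} (n : Fin ℓ → ℕ) {A : ∀ i, Set (Fin (n i) → ℂ)}
    (hA : ∀ i, MeasurableSet (A i)) :
    nuC (∑ i, n i) {z | ∀ i, (fun j => z (blockIdx n i j)) ∈ A i} = ∏ i, nuC (n i) (A i) := by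
  simp only [nuC_eq_pi, blockIdx_eq_finSigmaFinEquiv]
  exact measure_pi_setOf_forall_sigma_mem _ _ hA

lemma SupportsSC.ofReal_le_nuC_smul {n : ℕ} {hn : 0 < n} {K : Set (Fin n → ℂ)}
    (hsc : SupportsSC hn K) (hK : IsClosed K) {t : ℝ} (ht : 1 ≤ t) :
    ENNReal.ofReal (1 - (1 - (nuC n).real K) ^ (t ^ 2)) ≤ nuC n (t • K) := by
  have ht0 : 0 < t := by linarith
  rcases (prob_le_one (μ := nuC n) (s := K)).lt_or_eq with hlt | heq
  · obtain ⟨R, hR, hRK⟩ := exists_nuC_cylC_eq hn hlt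
    have hcyl := hsc R hR hRK.symm t ht
    rwa [nuC_smul_cylC hn hR ht0, measureReal_def, hRK, ← measureReal_def] at hcyl
  · rw [hK.measure_eq_one_iff_eq_univ.1 heq, smul_set_univ₀ ht0.ne', measure_univ]
    exact ENNReal.ofReal_le_one.2 (sub_le_self _ (Real.rpow_nonneg (by simp) _))

/-- **Tensorization.** If the closed sets `K i ⊆ ℂ^(n i)` each support the
SC-inequality, then so does their Cartesian product
`K 0 × ⋯ × K (ℓ-1) ⊆ ℂ^(n 0 + ⋯ + n (ℓ-1))`. -/
theorem supportsSC_prod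
    (ℓ : ℕ) (n : Fin ℓ → ℕ) (hn : ∀ i, 0 < n i) (hs : 0 < ∑ i, n i)
    (K : ∀ i, Set (Fin (n i) → ℂ))
    (hK_closed : ∀ i, IsClosed (K i))
    (hK_sc : ∀ i, SupportsSC (hn i) (K i)) :
    SupportsSC hs
      {z : Fin (∑ i, n i) → ℂ | ∀ i, (fun j => z (blockIdx n i j)) ∈ K i} := by
  intro R hR hKC t ht
  have ht0 : 0 < t := by linarith
  have ha : ∀ i ∈ Finset.univ, (nuC (n i)).real (K i) ∈ Icc (0 : ℝ) 1 :=
    fun i _ => ⟨measureReal_nonneg, measureReal_le_one⟩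
  have hcyl : (nuC _).real (cylC hs R) = ∏ i, (nuC (n i)).real (K i) := by
    rw [measureReal_def, ← hKC,
      nuC_setOf_forall_blockIdx_mem n fun i => (hK_closed i).measurableSet, ENNReal.toReal_prod]
    rfl
  calc nuC _ (t • cylC hs R)
      = ENNReal.ofReal (1 - (1 - ∏ i, (nuC (n i)).real (K i)) ^ (t ^ 2)) := by
        rw [nuC_smul_cylC hs hR ht0, hcyl]
    _ ≤ ENNReal.ofReal (∏ i, (1 - (1 - (nuC (n i)).real (K i)) ^ (t ^ 2))) :=
        ENNReal.ofReal_le_ofReal (one_sub_one_sub_prod_rpow_le _ (by nlinarith) ha)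
    _ = ∏ i, ENNReal.ofReal (1 - (1 - (nuC (n i)).real (K i)) ^ (t ^ 2)) :=
        ENNReal.ofReal_prod_of_nonneg fun i hi =>
          one_sub_one_sub_rpow_nonneg (sq_nonneg t) (ha i hi)
    _ ≤ ∏ i, nuC (n i) (t • K i) :=
        Finset.prod_le_prod' fun i _ => (hK_sc i).ofReal_le_nuC_smul (hK_closed i) ht
    _ = nuC _ (t • {z | ∀ i, (fun j => z (blockIdx n i j)) ∈ K i}) := by
        rw [smul_setOf_forall_comp_mem _ _ ht0.ne', nuC_setOf_forall_blockIdx_mem n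
          fun i => ((hK_closed i).smul_of_ne_zero ht0.ne').measurableSet]
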